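/- Let C = co(γ₁ ∪ γ₂ ∪ γ₃ ∪ γ₄) ⊆ ℝ³ with γ₁(t) = (0, −sin t, cos t − 1), γ₂(t) = (0, cos t − 1, −sin t), γ₃(t) = (−sin t, 1 − cos t, 0), γ₄(t) = (cos t − 1, sin t, 0), t ∈ [0, π/4]; let C' = 2C + (1/2, 0, 1/2), K = cone({1} × C') ⊆ ℝ⁴, F = cone({1} × (2·co(γ₃ ∪ γ₄) + (1/2, 0, 1/2))), and q = (−1, 0, −1, 2). Then q ∉ K° + F^⊥, where K° is the polar cone of K and F^⊥ = span{(1,0,0,−2)}. -/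

import Mathlib

/-! Test the polar cone against the points `(1, 2γ₁(t) + c)` of `K`. If
`q = p + μ (1, 0, 0, -2)` with `p ∈ K°`, then `⟨(1, 2γ₁(t) + c), p⟩ = 2 sin t - 4 (1 + μ) (1 - cos t)`,
which is positive for small `t > 0` because `sin` has slope `1` at `0` while `1 - cos` has slope `0`. -/

open Real Pointwise RealInnerProductSpace

/-- The conic hull: all nonnegative multiples of elements of `S`. -/
def coneHull {E : Type*} [AddCommMonoid E] [Module ℝ E] (S : Set E) : Set E :=
  {y | ∃ c : ℝ, 0 ≤ c ∧ ∃ x ∈ S, y = c • x}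

noncomputable def vec3 (a b c : ℝ) : EuclideanSpace ℝ (Fin 3) :=
  (WithLp.equiv 2 (Fin 3 → ℝ)).symm ![a, b, c]

noncomputable def vec4 (a b c d : ℝ) : EuclideanSpace ℝ (Fin 4) :=
  (WithLp.equiv 2 (Fin 4 → ℝ)).symm ![a, b, c, d]

/-- The point `(1, x) ∈ ℝ⁴` for `x ∈ ℝ³`. -/
noncomputable def liftPt (x : EuclideanSpace ℝ (Fin 3)) : EuclideanSpace ℝ (Fin 4) :=
  (WithLp.equiv 2 (Fin 4 → ℝ)).symm (Fin.cons 1 x)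

noncomputable def γ₁ (t : ℝ) : EuclideanSpace ℝ (Fin 3) := vec3 0 (-sin t) (cos t - 1)
noncomputable def γ₂ (t : ℝ) : EuclideanSpace ℝ (Fin 3) := vec3 0 (cos t - 1) (-sin t)
noncomputable def γ₃ (t : ℝ) : EuclideanSpace ℝ (Fin 3) := vec3 (-sin t) (1 - cos t) 0
noncomputable def γ₄ (t : ℝ) : EuclideanSpace ℝ (Fin 3) := vec3 (cos t - 1) (sin t) 0

/-- The translation vector `c = (1/2, 0, 1/2)`. -/
noncomputable def cvec : EuclideanSpace ℝ (Fin 3) := vec3 (1 / 2) 0 (1 / 2)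

/-- The face `F = cone({1} × (2 · co(γ₃ ∪ γ₄) + c)) ⊆ ℝ⁴`. -/
noncomputable def Fface : Set (EuclideanSpace ℝ (Fin 4)) :=
  coneHull {z | ∃ x ∈ (fun w => (2 : ℝ) • w + cvec) ''
    convexHull ℝ (γ₃ '' Set.Icc (0 : ℝ) (π / 4) ∪ γ₄ '' Set.Icc (0 : ℝ) (π / 4)),
    z = liftPt x}

/-- The set `C' = 2 · co(γ₁ ∪ γ₂ ∪ γ₃ ∪ γ₄) + c ⊆ ℝ³`. -/
noncomputable def C' : Set (EuclideanSpace ℝ (Fin 3)) :=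
  (fun w => (2 : ℝ) • w + cvec) ''
    convexHull ℝ (γ₁ '' Set.Icc (0 : ℝ) (π / 4) ∪ γ₂ '' Set.Icc (0 : ℝ) (π / 4) ∪
      γ₃ '' Set.Icc (0 : ℝ) (π / 4) ∪ γ₄ '' Set.Icc (0 : ℝ) (π / 4))

/-- The cone `K = cone({1} × C') ⊆ ℝ⁴`. -/
noncomputable def Kcone : Set (EuclideanSpace ℝ (Fin 4)) :=
  coneHull {z | ∃ x ∈ C', z = liftPt x}

open Filter Topology

lemma HasDerivAt.eventually_nhdsGT_pos {f : ℝ → ℝ} {f' x : ℝ} (hf : HasDerivAt f f' x)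
    (hf' : 0 < f') (hx : f x = 0) : ∀ᶠ y in 𝓝[>] x, 0 < f y := by
  have hslope := ((hasDerivAt_iff_tendsto_slope.mp hf).mono_left (nhdsGT_le_nhdsNE x)).eventually
    (eventually_gt_nhds hf')
  filter_upwards [hslope, self_mem_nhdsWithin] with y hy hxy
  exact pos_of_slope_pos hxy hy hx

lemma eventually_mul_one_sub_cos_lt_sin (a : ℝ) : ∀ᶠ t in 𝓝[>] 0, a * (1 - cos t) < sin t := by
  have hderiv : HasDerivAt (fun t => sin t - a * (1 - cos t)) 1 0 :=
    ((hasDerivAt_sin 0).sub (((hasDerivAt_cos 0).const_sub 1).const_mul a)).congr_deriv (by simp)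
  filter_upwards [hderiv.eventually_nhdsGT_pos one_pos (by simp)] with t ht
  linarith

lemma exists_inner_le_of_mem_polar_add_span {E : Type*} [NormedAddCommGroup E]
    [InnerProductSpace ℝ E] {K : Set E} {q v : E}
    (hq : q ∈ {y : E | ∀ x ∈ K, ⟪x, y⟫ ≤ 0} + ((Submodule.span ℝ {v} : Submodule ℝ E) : Set E)) :
    ∃ μ : ℝ, ∀ x ∈ K, ⟪x, q⟫ ≤ μ * ⟪x, v⟫ := by
  obtain ⟨p, hp, w, hw, rfl⟩ := hq
  obtain ⟨μ, rfl⟩ := Submodule.mem_span_singleton.mp hw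
  refine ⟨μ, fun x hx => ?_⟩
  rw [inner_add_right, real_inner_smul_right]
  linarith [hp x hx]

lemma liftPt_mem_Kcone {x : EuclideanSpace ℝ (Fin 3)} (hx : x ∈ C') : liftPt x ∈ Kcone :=
  ⟨1, zero_le_one, liftPt x, ⟨x, hx, rfl⟩, (one_smul ℝ _).symm⟩

lemma two_smul_γ₁_add_cvec_mem_C' {t : ℝ} (ht : t ∈ Set.Icc 0 (π / 4)) :
    (2 : ℝ) • γ₁ t + cvec ∈ C' :=
  ⟨γ₁ t, subset_convexHull ℝ _ (Or.inl (Or.inl (Or.inl ⟨t, ht, rfl⟩))), rfl⟩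

lemma liftPt_two_smul_γ₁_add_cvec (t : ℝ) :
    liftPt ((2 : ℝ) • γ₁ t + cvec) = vec4 1 (1 / 2) (-2 * sin t) (2 * cos t - 3 / 2) := by
  ext i
  fin_cases i <;> simp [liftPt, vec4, γ₁, cvec, vec3]; ring

lemma inner_vec4 (a b c d a' b' c' d' : ℝ) :
    ⟪vec4 a b c d, vec4 a' b' c' d'⟫ = a * a' + b * b' + c * c' + d * d' := by
  simp only [vec4, WithLp.equiv_symm_apply, PiLp.inner_apply, RCLike.inner_apply, ringHom_apply,
    Fin.sum_univ_four, Fin.isValue, Matrix.cons_val_zero, Matrix.cons_val_one, Matrix.cons_val]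
  ring

theorem stmt_18 :
    vec4 (-1) 0 (-1) 2 ∉
      {y : EuclideanSpace ℝ (Fin 4) | ∀ x ∈ Kcone, ⟪x, y⟫ ≤ 0} +
        ((Submodule.span ℝ {vec4 1 0 0 (-2)} : Submodule ℝ (EuclideanSpace ℝ (Fin 4))) :
          Set (EuclideanSpace ℝ (Fin 4))) := by
  intro hq
  obtain ⟨μ, hμ⟩ := exists_inner_le_of_mem_polar_add_span hq
  obtain ⟨t, hsin, ht0, htπ⟩ := ((eventually_mul_one_sub_cos_lt_sin (2 * (1 + μ))).and
    (Ioc_mem_nhdsGT (by positivity : (0 : ℝ) < π / 4))).exists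
  have hle := hμ _ (liftPt_mem_Kcone (two_smul_γ₁_add_cvec_mem_C' ⟨ht0.le, htπ⟩))
  rw [liftPt_two_smul_γ₁_add_cvec, inner_vec4, inner_vec4] at hle
  linarith
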